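/- arXiv:1702.06150 — 4 statements merged into one kernel-verified Lean document; each statement's English description precedes it below -/
import Mathlib

section
/- For every integer n ≥ 1, the number of Dyck paths of semilength n in which every peak occurs at odd height equals the Motzkin number M_{n-1}, i.e., equals the number of Motzkin paths of length n−1. -/
/-- A Dyck path: each step is +1 (upstep U) or -1 (downstep D), all partial sums
are nonnegative, and the total sum is 0. -/
def IsDyckPath (P : List ℤ) : Prop :=
  (∀ s ∈ P, s = 1 ∨ s = -1) ∧ (∀ k, 0 ≤ (P.take k).sum) ∧ P.sum = 0

/-- A Motzkin path: each step is +1 (U), 0 (F), or -1 (D), all partial sums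
are nonnegative, and the total sum is 0. -/
def IsMotzkinPath (M : List ℤ) : Prop :=
  (∀ s ∈ M, s = 1 ∨ s = 0 ∨ s = -1) ∧ (∀ k, 0 ≤ (M.take k).sum) ∧ M.sum = 0

/-- A peak at position `i`: an upstep at `i` immediately followed by a downstep. -/
def IsPeak (P : List ℤ) (i : ℕ) : Prop :=
  P[i]? = some 1 ∧ P[i + 1]? = some (-1)

/-- The height of the peak at position `i`: the level reached just after the upstep. -/
def peakHeight (P : List ℤ) (i : ℕ) : ℤ := (P.take (i + 1)).sum

/-- Every peak is at odd height; by convention the empty path has one peak at height 0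
(so `AllPeaksOdd []` is false). -/
def AllPeaksOdd (P : List ℤ) : Prop :=
  (P = [] → Odd (0 : ℤ)) ∧ ∀ i, IsPeak P i → Odd (peakHeight P i)

/-- Every peak is at even height; by convention the empty path has one peak at height 0. -/
def AllPeaksEven (P : List ℤ) : Prop :=
  (P = [] → Even (0 : ℤ)) ∧ ∀ i, IsPeak P i → Even (peakHeight P i)

/-- The Motzkin path has no flatstep at ground level. -/
def NoGroundFlat (M : List ℤ) : Prop :=
  ∀ i, M[i]? = some 0 → (M.take i).sum ≠ 0

/-- Replacement of a contiguous pair of Dyck steps by a Motzkin step: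
(U,U) ↦ U, (D,U) ↦ F, (D,D) ↦ D. -/
def pairStep (a b : ℤ) : ℤ :=
  if a = 1 ∧ b = 1 then 1
  else if a = -1 ∧ b = 1 then 0
  else if a = -1 ∧ b = -1 then -1
  else 0

/-- Split a list of steps into contiguous pairs and replace each pair via `pairStep`. -/
def pairContract (P : List ℤ) : List ℤ :=
  (List.range (P.length / 2)).map fun k => pairStep (P.getD (2 * k) 0) (P.getD (2 * k + 1) 0)

/-- The number of downsteps ending at ground level. -/
def groundDownCount (P : List ℤ) : ℕ :=
  ((Finset.range P.length).filter fun i =>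
    P[i]? = some (-1) ∧ (P.take (i + 1)).sum = 0).card

/-- The number of flatsteps at ground level. -/
def groundFlatCount (M : List ℤ) : ℕ :=
  ((Finset.range M.length).filter fun i =>
    M[i]? = some 0 ∧ (M.take i).sum = 0).card

/-- The number of peaks. -/
def peakCount (P : List ℤ) : ℕ :=
  ((Finset.range P.length).filter fun i =>
    P[i]? = some 1 ∧ P[i + 1]? = some (-1)).card

/-- The number of occurrences of an upstep immediately followed by an upstep. -/
def uuCount (M : List ℤ) : ℕ :=
  ((Finset.range M.length).filter fun i =>
    M[i]? = some 1 ∧ M[i + 1]? = some 1).card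

/-- The number of occurrences of a flatstep immediately followed by an upstep. -/
def fuCount (M : List ℤ) : ℕ :=
  ((Finset.range M.length).filter fun i =>
    M[i]? = some 0 ∧ M[i + 1]? = some 1).card


def mblock (s : ℤ) : List ℤ := if s = 1 then [1, 1] else if s = 0 then [-1, 1] else [-1, -1]

def mexpand (M : List ℤ) : List ℤ := 1 :: (M.flatMap mblock ++ [-1])

def mcontract : List ℤ → List ℤ
  | a :: b :: rest => (if a = 1 then 1 else if b = 1 then 0 else -1) :: mcontract rest
  | _ => []

lemma mblock_cases (s : ℤ) : mblock s = [1,1] ∨ mblock s = [-1,1] ∨ mblock s = [-1,-1] := by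
  unfold mblock; split_ifs <;> simp

lemma flatMap_length (M : List ℤ) : (M.flatMap mblock).length = 2 * M.length := by
  induction M with
  | nil => simp
  | cons s M ih =>
    rw [List.flatMap_cons, List.length_append, ih]
    rcases mblock_cases s with h | h | h <;> rw [h] <;> simp <;> ring

lemma mblock_sum (s : ℤ) (hs : s = 1 ∨ s = 0 ∨ s = -1) : (mblock s).sum = 2 * s := by
  rcases hs with h | h | h <;> subst h <;> simp [mblock]

lemma flatMap_sum (M : List ℤ) (hM : ∀ s ∈ M, s = 1 ∨ s = 0 ∨ s = -1) :
    (M.flatMap mblock).sum = 2 * M.sum := by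
  induction M with
  | nil => simp
  | cons s M ih =>
    rw [List.flatMap_cons, List.sum_append, List.sum_cons,
      ih (fun x hx => hM x (List.mem_cons_of_mem _ hx)), mblock_sum s (hM s (List.mem_cons_self))]
    ring

@[simp] lemma mblock_one : mblock 1 = [1,1] := by norm_num [mblock]
@[simp] lemma mblock_zero : mblock 0 = [-1,1] := by norm_num [mblock]
@[simp] lemma mblock_negone : mblock (-1) = [-1,-1] := by norm_num [mblock]

lemma flatMap_take_sum (M : List ℤ) (hM : ∀ s ∈ M, s = 1 ∨ s = 0 ∨ s = -1) (k : ℕ) :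
    ((M.flatMap mblock).take (2 * k)).sum = 2 * (M.take k).sum := by
  induction M generalizing k with
  | nil => simp
  | cons s M ih =>
    cases k with
    | zero => simp
    | succ k =>
      have hs := hM s (List.mem_cons_self)
      have h2 : 2 * (k + 1) = (2 * k) + 1 + 1 := by ring
      have ih' := ih (fun x hx => hM x (List.mem_cons_of_mem _ hx)) k
      rw [List.flatMap_cons, h2]
      rcases hs with h | h | h <;> subst h <;>
        simp only [mblock_one, mblock_zero, mblock_negone, List.cons_append, List.nil_append,
          List.take_succ_cons, List.sum_cons, ih'] <;> ring

lemma flatMap_take_ge (M : List ℤ) (hM : ∀ s ∈ M, s = 1 ∨ s = 0 ∨ s = -1) :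
    ∀ c : ℤ, 0 ≤ c → (∀ j, 0 ≤ c + (M.take j).sum) →
      ∀ k, -1 ≤ 2 * c + ((M.flatMap mblock).take k).sum := by
  induction M with
  | nil => intro c hc _ k; simp; omega
  | cons s M ih =>
    intro c hc hpre k
    have hs := hM s (List.mem_cons_self)
    have hcs : 0 ≤ c + s := by have := hpre 1; simpa using this
    have hpre' : ∀ j, 0 ≤ (c + s) + (M.take j).sum := by
      intro j
      have := hpre (j + 1)
      rw [List.take_succ_cons, List.sum_cons] at this
      linarith
    have ih' := ih (fun x hx => hM x (List.mem_cons_of_mem _ hx)) (c + s) hcs hpre'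
    rw [List.flatMap_cons]
    match k with
    | 0 => simpa using by omega
    | 1 =>
      rcases hs with h | h | h <;> subst h <;>
        simp only [mblock_one, mblock_zero, mblock_negone, List.cons_append, List.nil_append,
          List.take_succ_cons, List.take_zero, List.sum_cons, List.sum_nil] <;> omega
    | (k + 2) =>
      have h2 := ih' k
      rcases hs with h | h | h <;> subst h <;>
        simp only [mblock_one, mblock_zero, mblock_negone, List.cons_append, List.nil_append,
          List.take_succ_cons, List.sum_cons] <;> omega

lemma pm_sum_parity (P : List ℤ) (hP : ∀ s ∈ P, s = 1 ∨ s = -1) :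
    Even (P.sum + P.length) := by
  induction P with
  | nil => simp
  | cons s P ih =>
    have hs := hP s (List.mem_cons_self)
    have ih' := ih (fun x hx => hP x (List.mem_cons_of_mem _ hx))
    rw [List.sum_cons, List.length_cons]
    rcases ih' with ⟨t, ht⟩
    rcases hs with h | h <;> subst h
    · exact ⟨t + 1, by push_cast at ht ⊢; linarith⟩
    · exact ⟨t, by push_cast at ht ⊢; linarith⟩

lemma flatMap_get_odd (M : List ℤ) (hM : ∀ s ∈ M, s = 1 ∨ s = 0 ∨ s = -1) :
    ∀ j, (M.flatMap mblock)[2 * j]? = some 1 →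
      (M.flatMap mblock)[2 * j + 1]? = some 1 := by
  induction M with
  | nil => intro j h; simp at h
  | cons s M ih =>
    intro j h
    have hs := hM s (List.mem_cons_self)
    have ih' := ih (fun x hx => hM x (List.mem_cons_of_mem _ hx))
    rw [List.flatMap_cons] at h ⊢
    match j with
    | 0 =>
      rcases hs with hh | hh | hh <;> subst hh <;>
        simp_all [mblock_one, mblock_zero, mblock_negone]
    | (j + 1) =>
      have h2 : 2 * (j + 1) = (2 * j) + 1 + 1 := by ring
      rw [h2] at h ⊢
      rcases hs with hh | hh | hh <;> subst hh <;>
        simp only [mblock_one, mblock_zero, mblock_negone, List.cons_append, List.nil_append,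
          List.getElem?_cons_succ] at h ⊢ <;> exact ih' j h

lemma flatMap_mem (M : List ℤ) (hM : ∀ s ∈ M, s = 1 ∨ s = 0 ∨ s = -1) :
    ∀ x ∈ M.flatMap mblock, x = 1 ∨ x = -1 := by
  intro x hx
  rw [List.mem_flatMap] at hx
  obtain ⟨s, hs, hxs⟩ := hx
  rcases hM s hs with h | h | h <;> subst h <;> simp_all <;> omega

lemma mcontract_cons (a b : ℤ) (rest : List ℤ) :
    mcontract (a :: b :: rest) = (if a = 1 then 1 else if b = 1 then 0 else -1) :: mcontract rest := rfl

lemma mcontract_flatMap (M : List ℤ) (hM : ∀ s ∈ M, s = 1 ∨ s = 0 ∨ s = -1) :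
    mcontract (M.flatMap mblock) = M := by
  induction M with
  | nil => rfl
  | cons s M ih =>
    have hs := hM s (List.mem_cons_self)
    have ih' := ih (fun x hx => hM x (List.mem_cons_of_mem _ hx))
    rw [List.flatMap_cons]
    rcases hs with h | h | h <;> subst h <;>
      simp only [mblock_one, mblock_zero, mblock_negone, List.cons_append, List.nil_append,
        mcontract_cons, ih'] <;> norm_num

lemma mcontract_mem : ∀ Q : List ℤ, ∀ x ∈ mcontract Q, x = 1 ∨ x = 0 ∨ x = -1
  | [] => by simp [mcontract]
  | [a] => by simp [mcontract]
  | a :: b :: rest => by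
    intro x hx
    rw [mcontract, List.mem_cons] at hx
    rcases hx with h | h
    · subst h; split_ifs <;> simp
    · exact mcontract_mem rest x h

lemma flatMap_mcontract : ∀ Q : List ℤ, Even Q.length → (∀ x ∈ Q, x = 1 ∨ x = -1) →
    (∀ k, ¬(Q[2 * k]? = some 1 ∧ Q[2 * k + 1]? = some (-1))) →
    (mcontract Q).flatMap mblock = Q
  | [], _, _, _ => rfl
  | [a], h, _, _ => by simp [Nat.even_iff] at h
  | a :: b :: rest, hlen, hmem, hpair => by
    have hlen' : Even rest.length := by
      rw [Nat.even_iff] at hlen ⊢; simp only [List.length_cons] at hlen; omega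
    have hmem' : ∀ x ∈ rest, x = 1 ∨ x = -1 := fun x hx => hmem x (by simp [hx])
    have hpair' : ∀ k, ¬(rest[2 * k]? = some 1 ∧ rest[2 * k + 1]? = some (-1)) := by
      intro k hk
      have h2 : 2 * (k + 1) = (2 * k) + 1 + 1 := by ring
      exact hpair (k + 1) (by rw [h2]; simpa using hk)
    have ha := hmem a (by simp)
    have hb := hmem b (by simp)
    have h0 := hpair 0
    simp only [Nat.mul_zero, List.getElem?_cons_zero, Nat.zero_add, List.getElem?_cons_succ,
      not_and] at h0
    have ih := flatMap_mcontract rest hlen' hmem' hpair'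
    rcases ha with h | h <;> rcases hb with h' | h' <;> subst h <;> subst h' <;>
      simp_all [mcontract_cons, List.flatMap_cons]

lemma mexpand_mem_dyck (n : ℕ) (hn : 1 ≤ n) (M : List ℤ) (hlen : M.length = n - 1)
    (hM : IsMotzkinPath M) :
    (mexpand M).length = 2 * n ∧ IsDyckPath (mexpand M) ∧ AllPeaksOdd (mexpand M) := by
  obtain ⟨hmem, hpre, hsum⟩ := hM
  have hEx : mexpand M = 1 :: (M.flatMap mblock ++ [-1]) := rfl
  have hBlen : (M.flatMap mblock).length = 2 * M.length := flatMap_length M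
  have hBsum : (M.flatMap mblock).sum = 0 := by rw [flatMap_sum M hmem, hsum]; ring
  have hBmem : ∀ x ∈ M.flatMap mblock, x = 1 ∨ x = -1 := flatMap_mem M hmem
  have hPmem : ∀ s ∈ mexpand M, s = 1 ∨ s = -1 := by
    intro s hs
    rw [hEx, List.mem_cons, List.mem_append, List.mem_singleton] at hs
    rcases hs with h | h | h
    · exact Or.inl h
    · exact hBmem s h
    · exact Or.inr h
  refine ⟨?_, ⟨hPmem, ?_, ?_⟩, ?_, ?_⟩
  · rw [hEx, List.length_cons, List.length_append, hBlen, hlen, List.length_singleton]; omega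
  · intro k
    cases k with
    | zero => simp
    | succ k =>
      rw [hEx, List.take_succ_cons, List.sum_cons]
      have hge : -1 ≤ ((M.flatMap mblock ++ [-1]).take k).sum := by
        by_cases hk : k ≤ (M.flatMap mblock).length
        · rw [List.take_append_of_le_length hk]
          have := flatMap_take_ge M hmem 0 le_rfl (by simpa using hpre) k
          simpa using this
        · rw [List.take_of_length_le (by rw [List.length_append, List.length_singleton]; omega), List.sum_append, hBsum]
          simp
      omega
  · rw [hEx, List.sum_cons, List.sum_append, hBsum]; simp
  · intro h; rw [hEx] at h; simp at h
  · intro i hpk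
    obtain ⟨h1, h2⟩ := hpk
    have hi1 : i + 1 < (mexpand M).length := (List.getElem?_eq_some_iff.mp h2).1
    rcases Nat.even_or_odd i with he | ho
    · have hlen_take : ((mexpand M).take (i+1)).length = i + 1 := by
        rw [List.length_take]; omega
      have hpar := pm_sum_parity ((mexpand M).take (i+1)) (fun s hs => hPmem s (List.mem_of_mem_take hs))
      rw [hlen_take] at hpar
      unfold peakHeight
      obtain ⟨t, ht⟩ := he
      obtain ⟨u, hu⟩ := hpar
      exact ⟨u - t - 1, by push_cast at hu ⊢; omega⟩
    · exfalso
      obtain ⟨j, hj⟩ := ho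
      rw [hj] at h1 h2
      rw [hEx, List.getElem?_cons_succ] at h1
      rw [hEx, List.getElem?_cons_succ] at h2
      have hjlt : 2 * j < (M.flatMap mblock ++ [-1]).length := (List.getElem?_eq_some_iff.mp h1).1
      rw [List.length_append, List.length_singleton] at hjlt
      by_cases hcase : 2 * j < (M.flatMap mblock).length
      · have hb1 : (M.flatMap mblock)[2*j]? = some 1 := by
          rw [← List.getElem?_append_left hcase]; exact h1
        have hb2 := flatMap_get_odd M hmem j hb1
        have hlt2 : 2*j + 1 < (M.flatMap mblock).length := by omega
        rw [List.getElem?_append_left hlt2, hb2] at h2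
        simp at h2
      · have heq : 2 * j = (M.flatMap mblock).length := by omega
        rw [List.getElem?_append_right (le_of_eq heq.symm), heq] at h1
        simp at h1

lemma dyck_mem_image (n : ℕ) (hn : 1 ≤ n) (P : List ℤ) (hlen : P.length = 2 * n)
    (hD : IsDyckPath P) (hO : AllPeaksOdd P) :
    ∃ M, (M.length = n - 1 ∧ IsMotzkinPath M) ∧ mexpand M = P := by
  obtain ⟨hmem, hpre, hsum⟩ := hD
  match P, hlen, hmem, hpre, hsum, hO with
  | [], hlen, _, _, _, _ => simp at hlen; omega
  | a :: T, hlen, hmem, hpre, hsum, hO =>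
  have ha : a = 1 := by
    have h1 := hpre 1
    simp only [List.take_succ_cons, List.take_zero, List.sum_cons, List.sum_nil, add_zero] at h1
    rcases hmem a (List.mem_cons_self) with h | h
    · exact h
    · omega
  subst ha
  rcases List.eq_nil_or_concat T with hT | ⟨Q, b, hQb⟩
  · subst hT; simp at hlen; omega
  rw [List.concat_eq_append] at hQb
  subst hQb
  have hQlen : Q.length = 2 * n - 2 := by
    simp only [List.length_cons, List.length_append, List.length_singleton, List.length_nil] at hlen; omega
  have hQsum_b : (1:ℤ) + (Q.sum + b) = 0 := by
    simpa [List.sum_append] using hsum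
  have hpreQ : (0:ℤ) ≤ 1 + Q.sum := by
    have h := hpre (Q.length + 1)
    rw [List.take_succ_cons, List.take_append_of_le_length le_rfl, List.take_length,
      List.sum_cons] at h
    exact h
  have hb : b = -1 := by
    rcases hmem b (by simp) with h | h
    · omega
    · exact h
  subst hb
  have hQsum : Q.sum = 0 := by omega
  have hQmem : ∀ x ∈ Q, x = 1 ∨ x = -1 := fun x hx => hmem x (by simp [hx])
  have hpair : ∀ k, ¬(Q[2*k]? = some 1 ∧ Q[2*k+1]? = some (-1)) := by
    rintro k ⟨h1, h2⟩
    have hk1 : 2*k < Q.length := (List.getElem?_eq_some_iff.mp h1).1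
    have hk2 : 2*k+1 < Q.length := (List.getElem?_eq_some_iff.mp h2).1
    have hp1 : ((1:ℤ) :: (Q ++ [-1]))[2*k+1]? = some 1 := by
      rw [List.getElem?_cons_succ, List.getElem?_append_left hk1]; exact h1
    have hp2 : ((1:ℤ) :: (Q ++ [-1]))[2*k+1+1]? = some (-1) := by
      rw [List.getElem?_cons_succ, List.getElem?_append_left hk2]; exact h2
    have hodd := hO.2 (2*k+1) ⟨hp1, hp2⟩
    unfold peakHeight at hodd
    have hlt : 2*k+1+1 ≤ ((1:ℤ) :: (Q ++ [-1])).length := by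
      simp only [List.length_cons, List.length_append, List.length_singleton]; omega
    have htl : (((1:ℤ) :: (Q ++ [-1])).take (2*k+1+1)).length = 2*k+1+1 := by
      rw [List.length_take]; omega
    have hpar := pm_sum_parity (((1:ℤ) :: (Q ++ [-1])).take (2*k+1+1)) (fun s hs => hmem s (List.mem_of_mem_take hs))
    rw [htl] at hpar
    obtain ⟨u, hu⟩ := hpar
    obtain ⟨v, hv⟩ := hodd
    push_cast at hu; omega
  have hQeven : Even Q.length := ⟨n - 1, by omega⟩
  have hbind := flatMap_mcontract Q hQeven hQmem hpair
  have hMlen : Q.length = 2 * (mcontract Q).length := by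
    have h := flatMap_length (mcontract Q); rw [hbind] at h; omega
  have hMsum : (mcontract Q).sum = 0 := by
    have h := flatMap_sum (mcontract Q) (mcontract_mem Q); rw [hbind, hQsum] at h; omega
  have hMl2 : (mcontract Q).length = n - 1 := by omega
  refine ⟨mcontract Q, ⟨hMl2, mcontract_mem Q, ?_, hMsum⟩, ?_⟩
  · intro k
    have h2 := flatMap_take_sum (mcontract Q) (mcontract_mem Q) k
    rw [hbind] at h2
    by_cases hk : 2*k ≤ Q.length
    · have hp := hpre (2*k+1)
      rw [List.take_succ_cons, List.take_append_of_le_length hk, List.sum_cons] at hp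
      omega
    · rw [List.take_of_length_le (by omega), hMsum]
  · rw [mexpand, hbind]

/-- The number of Dyck paths of semilength `n ≥ 1` with all peaks at odd height
equals the number of Motzkin paths of length `n - 1`. -/
theorem dyck_odd_peaks_eq_motzkin (n : ℕ) (hn : 1 ≤ n) :
    {P : List ℤ | P.length = 2 * n ∧ IsDyckPath P ∧ AllPeaksOdd P}.ncard =
    {M : List ℤ | M.length = n - 1 ∧ IsMotzkinPath M}.ncard := by
  have himg : {P : List ℤ | P.length = 2 * n ∧ IsDyckPath P ∧ AllPeaksOdd P} =
      mexpand '' {M : List ℤ | M.length = n - 1 ∧ IsMotzkinPath M} := by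
    ext P
    simp only [Set.mem_setOf_eq, Set.mem_image]
    constructor
    · rintro ⟨h1, h2, h3⟩
      obtain ⟨M, hM, hMe⟩ := dyck_mem_image n hn P h1 h2 h3
      exact ⟨M, hM, hMe⟩
    · rintro ⟨M, ⟨hMl, hMm⟩, rfl⟩
      exact mexpand_mem_dyck n hn M hMl hMm
  rw [himg]
  apply Set.ncard_image_of_injOn
  intro M1 h1 M2 h2 he
  simp only [mexpand, List.cons.injEq, true_and] at he
  have hbe : M1.flatMap mblock = M2.flatMap mblock := List.append_cancel_right he
  calc M1 = mcontract (M1.flatMap mblock) := (mcontract_flatMap M1 h1.2.1).symm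
    _ = mcontract (M2.flatMap mblock) := by rw [hbe]
    _ = M2 := mcontract_flatMap M2 h2.2.1
end

section
/- For every integer n ≥ 0, the number of Dyck paths of semilength n in which every peak occurs at even height equals the number of Motzkin paths of length n having no flatstep at ground level. -/

def expand : List ℤ → List ℤ
  | [] => []
  | s :: M => (if s = 1 then [1, 1] else if s = 0 then [-1, 1] else [-1, -1]) ++ expand M

@[simp] lemma expand_nil : expand [] = [] := rfl

lemma expand_cons (s : ℤ) (M : List ℤ) :
    expand (s :: M) = (if s = 1 then [1, 1] else if s = 0 then [-1, 1] else [-1, -1]) ++ expand M := rfl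

@[simp] lemma expand_length (M : List ℤ) : (expand M).length = 2 * M.length := by
  induction M with
  | nil => simp
  | cons s M ih => rw [expand_cons]; split_ifs <;> simp [ih] <;> ring

lemma expand_append (A B : List ℤ) : expand (A ++ B) = expand A ++ expand B := by
  induction A with
  | nil => simp
  | cons s A ih => simp [expand_cons, ih]

lemma expand_mem {x : ℤ} {M : List ℤ} (hx : x ∈ expand M) : x = 1 ∨ x = -1 := by
  induction M with
  | nil => simp at hx
  | cons s M ih =>
    rw [expand_cons] at hx
    rcases List.mem_append.1 hx with h | h
    · split_ifs at h <;> simp_all <;> tauto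
    · exact ih h

lemma expand_sum {M : List ℤ} (hM : ∀ s ∈ M, s = 1 ∨ s = 0 ∨ s = -1) :
    (expand M).sum = 2 * M.sum := by
  induction M with
  | nil => simp
  | cons s M ih =>
    have hs := hM s (by simp)
    have ih' := ih fun x hx => hM x (by simp [hx])
    rw [expand_cons]
    rcases hs with h | h | h <;> subst h <;> simp [ih'] <;> ring

lemma expand_take_even (M : List ℤ) (k : ℕ) :
    (expand M).take (2 * k) = expand (M.take k) := by
  induction M generalizing k with
  | nil => simp
  | cons s M ih =>
    cases k with
    | zero => simp
    | succ k =>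
      rw [expand_cons, List.take_append]
      have h2 : (if s = 1 then [(1:ℤ), 1] else if s = 0 then [-1, 1] else [-1, -1]).length = 2 := by
        split_ifs <;> rfl
      rw [List.take_of_length_le (by omega), h2]
      have : 2 * (k + 1) - 2 = 2 * k := by omega
      rw [this, ih, List.take_succ_cons, expand_cons]


lemma expand_split {M : List ℤ} {k : ℕ} (hk : k < M.length) :
    expand M = expand (M.take k) ++
      ((if M[k] = 1 then [(1:ℤ), 1] else if M[k] = 0 then [-1, 1] else [-1, -1]) ++ expand (M.drop (k+1))) := by
  conv_lhs => rw [← List.take_append_drop k M]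
  rw [expand_append, List.drop_eq_getElem_cons hk, expand_cons]

lemma take_len {M : List ℤ} {k : ℕ} (hk : k < M.length) :
    (expand (M.take k)).length = 2 * k := by
  simp only [expand_length, List.length_take]; omega

lemma expand_getElem_even {M : List ℤ} {k : ℕ} (hk : k < M.length) :
    (expand M)[2 * k]? = some (if M[k] = 1 then 1 else -1) := by
  rw [expand_split hk, List.getElem?_append_right (by rw [take_len hk]), take_len hk]
  have : 2 * k - 2 * k = 0 := by omega
  rw [this]
  split_ifs <;> rfl

lemma expand_getElem_odd {M : List ℤ} (hM : ∀ s ∈ M, s = 1 ∨ s = 0 ∨ s = -1)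
    {k : ℕ} (hk : k < M.length) :
    (expand M)[2 * k + 1]? = some (if M[k] = -1 then -1 else 1) := by
  rw [expand_split hk, List.getElem?_append_right (by rw [take_len hk]; omega), take_len hk]
  have : 2 * k + 1 - 2 * k = 1 := by omega
  rw [this]
  rcases hM M[k] (List.getElem_mem hk) with h | h | h <;> simp [h]

lemma expand_sum_take_odd {M : List ℤ} (hM : ∀ s ∈ M, s = 1 ∨ s = 0 ∨ s = -1)
    {k : ℕ} (hk : k < M.length) :
    ((expand M).take (2 * k + 1)).sum = 2 * (M.take k).sum + (if M[k] = 1 then 1 else -1) := by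
  rw [expand_split hk, List.take_append,
    List.take_of_length_le (by rw [take_len hk]; omega), take_len hk]
  rw [List.sum_append, expand_sum (fun s hs => hM s (List.mem_of_mem_take hs))]
  have : 2 * k + 1 - 2 * k = 1 := by omega
  rw [this]
  split_ifs <;> simp

lemma parity_sum {L : List ℤ} (hL : ∀ s ∈ L, s = 1 ∨ s = -1) :
    Even (L.sum - L.length) := by
  induction L with
  | nil => simp
  | cons a L ih =>
    have ha := hL a (by simp)
    have ih' := ih fun x hx => hL x (by simp [hx])
    rcases ih' with ⟨r, hr⟩
    rcases ha with h | h <;> subst h <;>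
      [exact ⟨r, by simp only [List.sum_cons, List.length_cons] at hr ⊢; push_cast at hr ⊢; linarith⟩;
       exact ⟨r - 1, by simp only [List.sum_cons, List.length_cons] at hr ⊢; push_cast at hr ⊢; linarith⟩]

lemma expand_dyck {M : List ℤ} (hM : IsMotzkinPath M) (hg : NoGroundFlat M) :
    IsDyckPath (expand M) ∧ AllPeaksEven (expand M) := by
  obtain ⟨hent, hpre, hsum⟩ := hM
  have hsum2 : (expand M).sum = 0 := by rw [expand_sum hent, hsum]; ring
  constructor
  · refine ⟨fun s hs => expand_mem hs, fun j => ?_, hsum2⟩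
    rcases Nat.even_or_odd j with ⟨k, hk⟩ | ⟨k, hk⟩
    · subst hk
      rw [show k + k = 2 * k by ring, expand_take_even]
      rw [expand_sum (fun s hs => hent s (List.mem_of_mem_take hs))]
      have := hpre k; linarith
    · subst hk
      by_cases hkl : k < M.length
      · rw [show 2 * k + 1 = 2 * k + 1 from rfl, expand_sum_take_odd hent hkl]
        have h1 := hpre k
        rcases hent M[k] (List.getElem_mem hkl) with h | h | h
        · simp [h]; linarith
        · -- flat step: level ≠ 0 by NoGroundFlat
          have hne : (M.take k).sum ≠ 0 := by
            apply hg k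
            rw [List.getElem?_eq_getElem hkl, h]
          simp [h]
          omega
        · -- down step: level after is ≥ 0
          have h2 := hpre (k + 1)
          rw [List.sum_take_succ _ _ hkl, h] at h2
          simp [h]
          omega
      · rw [List.take_of_length_le (by rw [expand_length]; omega), hsum2]
  · refine ⟨fun _ => Even.zero, fun i hi => ?_⟩
    obtain ⟨h1, h2⟩ := hi
    rcases Nat.even_or_odd i with ⟨k, hk⟩ | ⟨k, hk⟩
    · exfalso
      have hkl : 2 * k < (expand M).length := by
        obtain ⟨h, _⟩ := List.getElem?_eq_some_iff.1 h1
        omega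
      rw [expand_length] at hkl
      have hkl' : k < M.length := by omega
      rw [show i = 2 * k by omega] at h1 h2
      rw [expand_getElem_even hkl'] at h1
      rw [expand_getElem_odd hent hkl'] at h2
      split_ifs at h1 with h
      · rw [if_neg (by rw [h]; norm_num)] at h2
        simp at h2
      · simp at h1
    · rw [show i = 2 * k + 1 by omega] at h1 h2 ⊢
      unfold peakHeight
      rw [show 2 * k + 1 + 1 = 2 * (k + 1) by ring, expand_take_even,
        expand_sum (fun s hs => hent s (List.mem_of_mem_take hs))]
      exact ⟨(M.take (k+1)).sum, by ring⟩

def contract : List ℤ → List ℤ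
  | a :: b :: P => (if a = 1 then 1 else if b = 1 then 0 else -1) :: contract P
  | _ => []

lemma contract_expand {M : List ℤ} (hM : ∀ s ∈ M, s = 1 ∨ s = 0 ∨ s = -1) :
    contract (expand M) = M := by
  induction M with
  | nil => rfl
  | cons s M ih =>
    have ih' := ih fun x hx => hM x (by simp [hx])
    rcases hM s (by simp) with h | h | h <;> subst h <;>
      simp [expand_cons, contract, ih']

lemma reconstruct : ∀ (P : List ℤ), Even P.length →
    (∀ s ∈ P, s = 1 ∨ s = -1) →
    (∀ k, ¬(P[2 * k]? = some 1 ∧ P[2 * k + 1]? = some (-1))) →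
    ∃ M, (∀ s ∈ M, s = 1 ∨ s = 0 ∨ s = -1) ∧ expand M = P
  | [], _, _, _ => ⟨[], by simp⟩
  | [a], hlen, _, _ => by simp [Nat.even_iff] at hlen
  | a :: b :: Q, hlen, hent, hpair => by
    have ha := hent a (by simp)
    have hb := hent b (by simp)
    obtain ⟨m, hm⟩ := hlen
    simp only [List.length_cons] at hm
    have hlenQ : Even Q.length := ⟨m - 1, by omega⟩
    obtain ⟨M, hM, hMe⟩ := reconstruct Q hlenQ
      (fun x hx => hent x (by simp [hx]))
      (fun k => by
        have := hpair (k + 1)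
        simpa [show 2 * (k + 1) = 2 * k + 1 + 1 by ring, List.getElem?_cons_succ] using this)
    have h0 := hpair 0
    simp at h0
    have hM' : ∀ (c : ℤ), c = 1 ∨ c = 0 ∨ c = -1 → ∀ s ∈ c :: M, s = 1 ∨ s = 0 ∨ s = -1 := by
      intro c hc s hs
      rcases List.mem_cons.1 hs with rfl | h
      · exact hc
      · exact hM s h
    rcases ha with ha | ha <;> rcases hb with hb | hb
    · exact ⟨1 :: M, hM' 1 (by norm_num), by simp [expand_cons, hMe, ha, hb]⟩
    · exact absurd hb (h0 ha)
    · exact ⟨0 :: M, hM' 0 (by norm_num), by simp [expand_cons, hMe, ha, hb]⟩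
    · exact ⟨-1 :: M, hM' (-1) (by norm_num), by simp [expand_cons, hMe, ha, hb]⟩

lemma dyck_to_motzkin {P : List ℤ} (hlen : Even P.length)
    (hP : IsDyckPath P) (he : AllPeaksEven P) :
    ∃ M, (M.length = P.length / 2 ∧ IsMotzkinPath M ∧ NoGroundFlat M) ∧ expand M = P := by
  obtain ⟨hent, hpre, hsum⟩ := hP
  have hpair : ∀ k, ¬(P[2 * k]? = some 1 ∧ P[2 * k + 1]? = some (-1)) := by
    rintro k ⟨h1, h2⟩
    have hpk := he.2 (2 * k) ⟨h1, h2⟩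
    have hklen : 2 * k + 1 < P.length := (List.getElem?_eq_some_iff.1 h2).1
    have hpar := parity_sum (L := P.take (2 * k + 1))
      (fun s hs => hent s (List.mem_of_mem_take hs))
    rw [List.length_take, min_eq_left (by omega)] at hpar
    unfold peakHeight at hpk
    obtain ⟨r, hr⟩ := hpk
    obtain ⟨t, ht⟩ := hpar
    push_cast at ht
    omega
  obtain ⟨M, hMent, hMe⟩ := reconstruct P hlen hent hpair
  have hMlen : M.length = P.length / 2 := by
    have := expand_length M
    rw [hMe] at this
    omega
  have hMsum : M.sum = 0 := by
    have := expand_sum hMent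
    rw [hMe, hsum] at this
    linarith
  refine ⟨M, ⟨hMlen, ⟨hMent, fun k => ?_, hMsum⟩, fun i hi0 hit => ?_⟩, hMe⟩
  · have h := hpre (2 * k)
    rw [← hMe, expand_take_even,
      expand_sum (fun s hs => hMent s (List.mem_of_mem_take hs))] at h
    linarith
  · have hil : i < M.length := by
      have := (List.getElem?_eq_some_iff.1 hi0).1
      omega
    have hi0' : M[i] = 0 := by
      rw [List.getElem?_eq_getElem hil] at hi0
      exact Option.some_injective _ hi0
    have h := hpre (2 * i + 1)
    rw [← hMe, expand_sum_take_odd hMent hil, hit, hi0'] at h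
    norm_num at h

/-- The number of Dyck paths of semilength `n` with all peaks at even height equals
the number of Motzkin paths of length `n` with no flatstep at ground level. -/
theorem dyck_even_peaks_eq_riordan (n : ℕ) :
    {P : List ℤ | P.length = 2 * n ∧ IsDyckPath P ∧ AllPeaksEven P}.ncard =
    {M : List ℤ | M.length = n ∧ IsMotzkinPath M ∧ NoGroundFlat M}.ncard := by
  have himg : {P : List ℤ | P.length = 2 * n ∧ IsDyckPath P ∧ AllPeaksEven P} =
      expand '' {M : List ℤ | M.length = n ∧ IsMotzkinPath M ∧ NoGroundFlat M} := by
    ext P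
    simp only [Set.mem_setOf_eq, Set.mem_image]
    constructor
    · rintro ⟨hlen, hP, he⟩
      obtain ⟨M, ⟨hMlen, hMp, hMg⟩, hMe⟩ := dyck_to_motzkin ⟨n, by omega⟩ hP he
      exact ⟨M, ⟨by omega, hMp, hMg⟩, hMe⟩
    · rintro ⟨M, ⟨hMlen, hMp, hMg⟩, rfl⟩
      obtain ⟨hd, he⟩ := expand_dyck hMp hMg
      exact ⟨by rw [expand_length, hMlen], hd, he⟩
  rw [himg]
  apply Set.ncard_image_of_injOn
  intro M1 h1 M2 h2 heq
  rw [← contract_expand h1.2.1.1, heq, contract_expand h2.2.1.1]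
end

section
/- Let P be a Dyck path of semilength n ≥ 1 in which every peak occurs at odd height. Delete the first and last steps of P, split the remaining 2n−2 steps into n−1 contiguous pairs, and replace each pair (U,U) by a step U, each pair (D,U) by a step F, and each pair (D,D) by a step D. Then the resulting sequence of n−1 steps is a Motzkin path of length n−1. -/
lemma even_sum_add_length (L : List ℤ) (h : ∀ s ∈ L, s = 1 ∨ s = -1) :
    Even (L.sum + L.length) := by
  induction L with
  | nil => simp
  | cons a l ih =>
    have ha := h a (by simp)
    obtain ⟨m, hm⟩ := ih (fun s hs => h s (by simp [hs]))
    simp only [List.sum_cons, List.length_cons]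
    rcases ha with h1 | h1 <;> subst h1
    · exact ⟨m + 1, by push_cast at hm ⊢; linarith⟩
    · exact ⟨m, by push_cast at hm ⊢; linarith⟩

lemma pairStep_mem' (a b : ℤ) : pairStep a b = 1 ∨ pairStep a b = 0 ∨ pairStep a b = -1 := by
  unfold pairStep; split_ifs <;> simp

lemma two_mul_pairStep (a b : ℤ) (ha : a = 1 ∨ a = -1) (hb : b = 1 ∨ b = -1) :
    2 * pairStep a b = a + b := by
  rcases ha with rfl | rfl <;> rcases hb with rfl | rfl <;> unfold pairStep <;> norm_num

/-- For a Dyck path of semilength `n ≥ 1` with all peaks at odd height, deleting the first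
and last steps, splitting into contiguous pairs, and replacing (U,U) ↦ U, (D,U) ↦ F,
(D,D) ↦ D yields a Motzkin path of length `n - 1`. -/
theorem pairContract_odd_is_motzkin (n : ℕ) (hn : 1 ≤ n) (P : List ℤ)
    (hlen : P.length = 2 * n) (hP : IsDyckPath P) (hodd : AllPeaksOdd P) :
    (pairContract ((P.drop 1).dropLast)).length = n - 1 ∧
    IsMotzkinPath (pairContract ((P.drop 1).dropLast)) := by
  obtain ⟨hsteps, hnonneg, hzero⟩ := hP
  set Q : List ℤ := (P.drop 1).dropLast with hQdef
  set M : List ℤ := pairContract Q with hMdef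
  have hQlen : Q.length = 2 * n - 2 := by
    simp only [hQdef, List.length_dropLast, List.length_drop, hlen]
    omega
  have hMlen : M.length = n - 1 := by
    simp only [hMdef, pairContract, List.length_map, List.length_range, hQlen]
    omega
  -- access to Q in terms of P
  have hQget : ∀ j, j < 2 * n - 2 → Q.getD j 0 = P.getD (j + 1) 0 := by
    intro j hj
    have h1 : j < Q.length := by omega
    have h2 : j + 1 < P.length := by omega
    have h3 : j < (P.drop 1).length := by simp [List.length_drop]; omega
    rw [List.getD_eq_getElem _ _ h1, List.getD_eq_getElem _ _ h2]
    simp only [hQdef]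
    rw [List.getElem_dropLast, List.getElem_drop]
    congr 1
    omega
  have hmem : ∀ j, j < 2 * n → (P.getD j 0 = 1 ∨ P.getD j 0 = -1) := by
    intro j hj
    have h2 : j < P.length := by omega
    rw [List.getD_eq_getElem _ _ h2]
    exact hsteps _ (List.getElem_mem h2)
  have hSodd : ∀ k, 2 * k + 1 ≤ 2 * n → 1 ≤ (P.take (2 * k + 1)).sum := by
    intro k hk
    have hlen' : (P.take (2 * k + 1)).length = 2 * k + 1 := by
      rw [List.length_take]; omega
    have hev := even_sum_add_length (P.take (2 * k + 1))
      (fun s hs => hsteps s (List.mem_of_mem_take hs))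
    rw [hlen'] at hev
    have hge := hnonneg (2 * k + 1)
    rcases eq_or_lt_of_le hge with heq | hlt
    · exfalso
      obtain ⟨m, hm⟩ := hev
      rw [← heq] at hm
      push_cast at hm
      omega
    · exact hlt
  have hstep : ∀ m, m < 2 * n →
      (P.take (m + 1)).sum = (P.take m).sum + P.getD m 0 := by
    intro m hm
    have h2 : m < P.length := by omega
    rw [List.sum_take_succ _ _ h2, List.getD_eq_getElem _ _ h2]
  have hMget : ∀ k, k < n - 1 →
      M.getD k 0 = pairStep (P.getD (2 * k + 1) 0) (P.getD (2 * k + 2) 0) := by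
    intro k hk
    have h1 : k < M.length := by omega
    rw [List.getD_eq_getElem _ _ h1]
    simp only [hMdef, pairContract]
    rw [List.getElem_map]
    rw [List.getElem_range]
    rw [hQget (2 * k) (by omega), hQget (2 * k + 1) (by omega)]
  -- key partial sum identity
  have hsum : ∀ k, k ≤ n - 1 →
      2 * ((M.take k).sum) = (P.take (2 * k + 1)).sum - 1 := by
    intro k hk
    induction k with
    | zero =>
      have h1 := hstep 0 (by omega)
      have h2 := hmem 0 (by omega)
      have h3 := hnonneg 1
      simp only [Nat.mul_zero, Nat.zero_add, List.take_zero, List.sum_nil, mul_zero,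
        zero_add] at h1 h3 ⊢
      rcases h2 with h2 | h2 <;> omega
    | succ k ih =>
      have hk' : k ≤ n - 1 := by omega
      have hkk : k < n - 1 := by omega
      have ih' := ih hk'
      have h1 : k < M.length := by omega
      have htake : (M.take (k + 1)).sum = (M.take k).sum + M.getD k 0 := by
        rw [List.sum_take_succ _ _ h1, List.getD_eq_getElem _ _ h1]
      rw [htake, hMget k hkk]
      have hA := hstep (2 * k + 1) (by omega)
      have hB := hstep (2 * k + 2) (by omega)
      have hab := two_mul_pairStep (P.getD (2 * k + 1) 0) (P.getD (2 * k + 2) 0)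
        (hmem _ (by omega)) (hmem _ (by omega))
      have : 2 * (k + 1) + 1 = (2 * k + 2) + 1 := by ring
      rw [this, hB]
      have : 2 * k + 2 = (2 * k + 1) + 1 := by ring
      rw [this, hA]
      linarith
  have hlast : (P.take (2 * n - 1)).sum = 1 := by
    have h1 : (P.take (2 * n)).sum = (P.take (2 * n - 1)).sum + P.getD (2 * n - 1) 0 := by
      have := hstep (2 * n - 1) (by omega)
      convert this using 3
      omega
    have h2 : (P.take (2 * n)).sum = 0 := by
      rw [List.take_of_length_le (by omega : P.length ≤ 2 * n)]
      exact hzero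
    have h3 := hmem (2 * n - 1) (by omega)
    have h4 := hnonneg (2 * n - 1)
    have h5 := hSodd (n - 1) (by omega)
    have h6 : 2 * (n - 1) + 1 = 2 * n - 1 := by omega
    rw [h6] at h5
    rcases h3 with h3 | h3 <;> omega
  have hMsum : M.sum = 0 := by
    have h1 : (M.take (n - 1)).sum = M.sum := by
      rw [List.take_of_length_le (by omega : M.length ≤ n - 1)]
    have h2 := hsum (n - 1) le_rfl
    rw [h1] at h2
    have h6 : 2 * (n - 1) + 1 = 2 * n - 1 := by omega
    rw [h6, hlast] at h2
    omega
  refine ⟨hMlen, ?_, ?_, hMsum⟩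
  · intro s hs
    simp only [hMdef, pairContract, List.mem_map] at hs
    obtain ⟨k, _, rfl⟩ := hs
    exact pairStep_mem' _ _
  · intro k
    rcases le_or_gt k (n - 1) with hk | hk
    · have h1 := hsum k hk
      have h2 := hSodd k (by omega)
      omega
    · rw [List.take_of_length_le (by omega : M.length ≤ k), hMsum]
end

section
/- Let P be a Dyck path of semilength n in which every peak occurs at even height. Split its 2n steps into n contiguous pairs and replace each pair (U,U) by a step U, each pair (D,U) by a step F, and each pair (D,D) by a step D. Then the resulting sequence of n steps is a Motzkin path of length n with no flatstep at ground level. -/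

private lemma sum_mod_two_aux (L : List ℤ) (h : ∀ s ∈ L, s = 1 ∨ s = -1) :
    L.sum % 2 = (L.length : ℤ) % 2 := by
  induction L with
  | nil => simp
  | cons a t ih =>
    have ha := h a (by simp)
    have ih' := ih (fun s hs => h s (by simp [hs]))
    simp only [List.sum_cons, List.length_cons]
    push_cast
    rcases ha with rfl | rfl <;> omega

/-- For a Dyck path of semilength `n` with all peaks at even height, splitting into
contiguous pairs and replacing (U,U) ↦ U, (D,U) ↦ F, (D,D) ↦ D yields a Motzkin path of
length `n` with no flatstep at ground level. -/
theorem pairContract_even_is_riordan (n : ℕ) (P : List ℤ) (hlen : P.length = 2 * n)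
    (hP : IsDyckPath P) (heven : AllPeaksEven P) :
    (pairContract P).length = n ∧ IsMotzkinPath (pairContract P) ∧
    NoGroundFlat (pairContract P) := by
  obtain ⟨hpm, hnn, hsum⟩ := hP
  set f : ℕ → ℤ := fun k => pairStep (P.getD (2 * k) 0) (P.getD (2 * k + 1) 0) with hf
  have hM : pairContract P = (List.range n).map f := by
    unfold pairContract
    rw [hlen, show 2 * n / 2 = n from by omega]
  have hMlen : (pairContract P).length = n := by rw [hM]; simp
  have key : ∀ k, k < n →
      2 * f k = P.getD (2 * k) 0 + P.getD (2 * k + 1) 0 ∧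
      (f k = 1 ∨ f k = 0 ∨ f k = -1) ∧
      (f k = 0 → P.getD (2 * k) 0 = -1) := by
    intro k hk
    have h1 : 2 * k < P.length := by omega
    have h2 : 2 * k + 1 < P.length := by omega
    have hga : P.getD (2 * k) 0 = P[2 * k]'h1 := by
      simp [List.getD_eq_getElem?_getD, List.getElem?_eq_getElem h1]
    have hgb : P.getD (2 * k + 1) 0 = P[2 * k + 1]'h2 := by
      simp [List.getD_eq_getElem?_getD, List.getElem?_eq_getElem h2]
    have ha : P.getD (2 * k) 0 = 1 ∨ P.getD (2 * k) 0 = -1 := by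
      rw [hga]; exact hpm _ (List.getElem_mem h1)
    have hb : P.getD (2 * k + 1) 0 = 1 ∨ P.getD (2 * k + 1) 0 = -1 := by
      rw [hgb]; exact hpm _ (List.getElem_mem h2)
    have hnud : ¬ (P.getD (2 * k) 0 = 1 ∧ P.getD (2 * k + 1) 0 = -1) := by
      rintro ⟨hu, hd⟩
      have hpeak : IsPeak P (2 * k) := by
        constructor
        · rw [List.getElem?_eq_getElem h1, ← hga, hu]
        · rw [List.getElem?_eq_getElem h2, ← hgb, hd]
      have he := heven.2 (2 * k) hpeak
      unfold peakHeight at he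
      obtain ⟨c, hc⟩ := he
      have hpar := sum_mod_two_aux (P.take (2 * k + 1))
        (fun s hs => hpm s (List.mem_of_mem_take hs))
      have hlt : (P.take (2 * k + 1)).length = 2 * k + 1 := by
        rw [List.length_take]; omega
      rw [hlt] at hpar
      push_cast at hpar
      omega
    simp only [hf]
    rcases ha with ha | ha <;> rcases hb with hb | hb
    · rw [ha, hb]; norm_num [pairStep]
    · exact absurd ⟨ha, hb⟩ hnud
    · rw [ha, hb]; norm_num [pairStep]
    · rw [ha, hb]; norm_num [pairStep]
  have hpart : ∀ k, k ≤ n →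
      2 * (((List.range k).map f).sum) = (P.take (2 * k)).sum := by
    intro k hk
    induction k with
    | zero => simp
    | succ k ih =>
      have hk' : k < n := by omega
      have ih' := ih (by omega)
      obtain ⟨h2f, -, -⟩ := key k hk'
      have h1 : 2 * k < P.length := by omega
      have h2 : 2 * k + 1 < P.length := by omega
      have hga : P.getD (2 * k) 0 = P[2 * k]'h1 := by
        simp [List.getD_eq_getElem?_getD, List.getElem?_eq_getElem h1]
      have hgb : P.getD (2 * k + 1) 0 = P[2 * k + 1]'h2 := by
        simp [List.getD_eq_getElem?_getD, List.getElem?_eq_getElem h2]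
      have e1 : (P.take (2 * k + 1)).sum = (P.take (2 * k)).sum + P[2 * k]'h1 :=
        List.sum_take_succ _ _ h1
      have e2 : (P.take (2 * k + 1 + 1)).sum = (P.take (2 * k + 1)).sum + P[2 * k + 1]'h2 :=
        List.sum_take_succ _ _ h2
      rw [List.range_succ, List.map_append, List.sum_append,
        show 2 * (k + 1) = 2 * k + 1 + 1 from by ring, e2, e1]
      simp only [List.map_cons, List.map_nil, List.sum_cons, List.sum_nil]
      rw [← hga, ← hgb]
      omega
  have htake : ∀ k, ((pairContract P).take k).sum =
      ((List.range (min k n)).map f).sum := by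
    intro k
    rw [hM, ← List.map_take, List.take_range]
  refine ⟨hMlen, ⟨?_, ?_, ?_⟩, ?_⟩
  · intro s hs
    rw [hM] at hs
    obtain ⟨i, hi, rfl⟩ := List.mem_map.mp hs
    exact (key i (List.mem_range.mp hi)).2.1
  · intro k
    rw [htake k]
    have := hpart (min k n) (by omega)
    have := hnn (2 * min k n)
    omega
  · have hwhole : (pairContract P).sum = ((pairContract P).take n).sum := by
      rw [← hMlen, List.take_length]
    rw [hwhole, htake n]
    have h1 := hpart (min n n) (by omega)
    simp only [min_self] at h1 ⊢
    rw [show 2 * n = P.length from by omega, List.take_length, hsum] at h1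
    omega
  · intro i hzero hground
    rw [hM] at hzero
    have hi : i < n := by
      by_contra hin
      rw [List.getElem?_eq_none_iff.mpr (by simp; omega)] at hzero
      cases hzero
    have hfi : f i = 0 := by
      rw [List.getElem?_map, List.getElem?_range hi] at hzero
      simpa using hzero
    have hdown := (key i hi).2.2 hfi
    rw [htake i, show min i n = i from by omega] at hground
    have hps := hpart i (by omega)
    rw [hground] at hps
    have h1 : 2 * i < P.length := by omega
    have hga : P.getD (2 * i) 0 = P[2 * i]'h1 := by
      simp [List.getD_eq_getElem?_getD, List.getElem?_eq_getElem h1]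
    have hstep : (P.take (2 * i + 1)).sum = (P.take (2 * i)).sum + P[2 * i]'h1 :=
      List.sum_take_succ _ _ h1
    rw [← hga, hdown, ← hps] at hstep
    have := hnn (2 * i + 1)
    rw [hstep] at this
    omega
end
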